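/- For all integers 1 ≤ k ≤ d and every integer N ≥ 2, one has bp_k(K_N) ≤ d if and only if N ≤ n(k,d); in other words, n(k,d) is the largest positive integer N such that bp_k(K_N) ≤ d. -/

import Mathlib

/-- The three-letter alphabet `S = {0, 1, ∗}`. -/
inductive Tern | zero | one | star
deriving DecidableEq

instance instFintypeTern : Fintype Tern where
  elems := {Tern.zero, Tern.one, Tern.star}
  complete := by intro x; cases x <;> simp

/-- `clash x y` is true iff both `x, y ∈ {0,1}` and `x ≠ y`. -/
def clash : Tern → Tern → Bool
  | Tern.zero, Tern.one => true
  | Tern.one, Tern.zero => true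
  | _, _ => false

/-- `dist u v`: the number of positions where both letters are binary and they differ. -/
def dist {d : ℕ} (u v : Fin d → Tern) : ℕ :=
  (Finset.univ.filter (fun i => clash (u i) (v i))).card

/-- A `k`-neighborly code in `S^d`: every two distinct members `u, v`
satisfy `1 ≤ dist(u,v) ≤ k`. -/
def IsNeighborlyCode (k d : ℕ) (V : Finset (Fin d → Tern)) : Prop :=
  ∀ u ∈ V, ∀ v ∈ V, u ≠ v → 1 ≤ dist u v ∧ dist u v ≤ k

/-- `n(k,d)`: the maximum size of a `k`-neighborly code in `S^d`. -/
noncomputable def nMax (k d : ℕ) : ℕ :=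
  sSup {m : ℕ | ∃ V : Finset (Fin d → Tern), IsNeighborlyCode k d V ∧ V.card = m}

/-- The number of bipartite cliques (given by their parts `X i`, `Y i`) of the
covering that contain the edge `uv`. -/
def coverCount {N m : ℕ} (X Y : Fin m → Finset (Fin N)) (u v : Fin N) : ℕ :=
  (Finset.univ.filter (fun i => (u ∈ X i ∧ v ∈ Y i) ∨ (u ∈ Y i ∧ v ∈ X i))).card

/-- `K_N` admits a collection of `m` complete bipartite subgraphs (each given by a
pair of disjoint nonempty vertex sets) such that every edge of `K_N` lies in at
least one and at most `k` of them. -/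
def HasBipCover (k N m : ℕ) : Prop :=
  ∃ X Y : Fin m → Finset (Fin N),
    (∀ i, (X i).Nonempty ∧ (Y i).Nonempty ∧ Disjoint (X i) (Y i)) ∧
    ∀ u v : Fin N, u ≠ v → 1 ≤ coverCount X Y u v ∧ coverCount X Y u v ≤ k

/-- `bp_k(K_N)`: the minimum number of complete bipartite subgraphs of `K_N`
covering every edge at least once and at most `k` times. -/
noncomputable def bp (k N : ℕ) : ℕ := sInf {m : ℕ | HasBipCover k N m}

/-! A covering of `K_N` by `m` bicliques and a family of `N` words in `S^m` are two views of
the same object: the `i`-th letter of the word of `u` is `0`, `1` or `∗` according as `u` lies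
in the first side, the second side, or neither side of the `i`-th biclique, and then `dist`
between the words of `u` and `v` counts the bicliques containing the edge `uv`. Padding words
with `∗` and discarding bicliques with an empty side pass between lengths `m ≤ d`. -/

open Finset

lemma clash_self (x : Tern) : clash x x = false := by cases x <;> rfl

lemma clash_eq_true_iff {x y : Tern} : clash x y = true ↔
    (x = .zero ∧ y = .one) ∨ (x = .one ∧ y = .zero) := by
  cases x <;> cases y <;> simp [clash]

lemma dist_self_eq_zero {d : ℕ} (u : Fin d → Tern) : dist u u = 0 := by
  simp [_root_.dist, clash_self]

lemma card_filter_comp_embedding {α β : Type*} [Fintype α] [Fintype β] (e : α ↪ β)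
    {P : β → Prop} [DecidablePred P] (hP : ∀ b, P b → b ∈ Set.range e) :
    #(univ.filter P) = #(univ.filter (P ∘ e)) := by
  rw [← card_map e, ← filter_map]
  congr 1
  ext b
  simp only [mem_filter, mem_map, mem_univ, true_and]
  exact ⟨fun hb => ⟨hP b hb, hb⟩, And.right⟩

lemma IsNeighborlyCode.mono {k d : ℕ} {V W : Finset (Fin d → Tern)} (hV : IsNeighborlyCode k d V)
    (hWV : W ⊆ V) : IsNeighborlyCode k d W :=
  fun u hu v hv huv => hV u (hWV hu) v (hWV hv) huv

lemma isNeighborlyCode_image {k d N : ℕ} (w : Fin N → Fin d → Tern)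
    (hw : ∀ u v, u ≠ v → 1 ≤ dist (w u) (w v) ∧ dist (w u) (w v) ≤ k) :
    IsNeighborlyCode k d (univ.image w) ∧ #(univ.image w) = N := by
  have hinj : Function.Injective w := by
    intro u v huv
    by_contra hne
    have := (hw u v hne).1
    rw [huv, dist_self_eq_zero] at this
    omega
  refine ⟨?_, by simp [card_image_of_injective _ hinj]⟩
  simp only [IsNeighborlyCode, mem_image, mem_univ, true_and]
  rintro _ ⟨u, rfl⟩ _ ⟨v, rfl⟩ huv
  exact hw u v (ne_of_apply_ne w huv)

lemma bddAbove_neighborlyCodeSizes (k d : ℕ) :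
    BddAbove {m : ℕ | ∃ V : Finset (Fin d → Tern), IsNeighborlyCode k d V ∧ #V = m} :=
  ⟨Fintype.card (Fin d → Tern), by rintro _ ⟨V, -, rfl⟩; exact card_le_univ V⟩

lemma card_le_nMax {k d : ℕ} {V : Finset (Fin d → Tern)} (hV : IsNeighborlyCode k d V) :
    #V ≤ nMax k d :=
  le_csSup (bddAbove_neighborlyCodeSizes k d) ⟨V, hV, rfl⟩

lemma exists_isNeighborlyCode_card_eq_nMax (k d : ℕ) :
    ∃ V : Finset (Fin d → Tern), IsNeighborlyCode k d V ∧ #V = nMax k d := by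
  refine Nat.sSup_mem ?_ (bddAbove_neighborlyCodeSizes k d)
  exact ⟨0, ∅, by simp [IsNeighborlyCode], rfl⟩

section CoverToCode

variable {N m : ℕ} (X Y : Fin m → Finset (Fin N))

def coverWord (u : Fin N) (i : Fin m) : Tern :=
  if u ∈ X i then .zero else if u ∈ Y i then .one else .star

variable {X Y}

lemma clash_coverWord {i : Fin m} (hi : Disjoint (X i) (Y i)) (u v : Fin N) :
    clash (coverWord X Y u i) (coverWord X Y v i) = true ↔
      (u ∈ X i ∧ v ∈ Y i) ∨ (u ∈ Y i ∧ v ∈ X i) := by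
  have hX := disjoint_left.1 hi
  by_cases hu : u ∈ X i <;> by_cases hu' : u ∈ Y i <;>
    by_cases hv : v ∈ X i <;> by_cases hv' : v ∈ Y i <;>
    simp_all [coverWord, clash]

lemma dist_coverWord (hXY : ∀ i, Disjoint (X i) (Y i)) (u v : Fin N) :
    dist (coverWord X Y u) (coverWord X Y v) = coverCount X Y u v := by
  simp only [_root_.dist, coverCount, clash_coverWord (hXY _)]

end CoverToCode

def padStar {m : ℕ} (d : ℕ) (w : Fin m → Tern) (j : Fin d) : Tern :=
  if hj : (j : ℕ) < m then w ⟨j, hj⟩ else .star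

lemma dist_padStar {m d : ℕ} (h : m ≤ d) (u v : Fin m → Tern) :
    dist (padStar d u) (padStar d v) = dist u v := by
  unfold _root_.dist
  rw [card_filter_comp_embedding (Fin.castLEEmb h)]
  · simp [padStar, Function.comp_def]
  · intro j hj
    rw [Fin.coe_castLEEmb, Fin.range_castLE, Set.mem_ofPred_eq]
    by_contra hjm
    simp [padStar, hjm, clash] at hj

lemma exists_isNeighborlyCode_of_hasBipCover {k N m d : ℕ} (hm : m ≤ d)
    (h : HasBipCover k N m) :
    ∃ V : Finset (Fin d → Tern), IsNeighborlyCode k d V ∧ #V = N := by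
  obtain ⟨X, Y, hXY, hcov⟩ := h
  refine ⟨_, isNeighborlyCode_image (fun u => padStar d (coverWord X Y u)) fun u v huv => ?_⟩
  rw [dist_padStar hm, dist_coverWord fun i => (hXY i).2.2]
  exact hcov u v huv

lemma exists_hasBipCover_le_of_disjoint {k N m : ℕ} (X Y : Fin m → Finset (Fin N))
    (hXY : ∀ i, Disjoint (X i) (Y i))
    (hcov : ∀ u v, u ≠ v → 1 ≤ coverCount X Y u v ∧ coverCount X Y u v ≤ k) :
    ∃ m' ≤ m, HasBipCover k N m' := by
  classical
  set good := univ.filter fun i => (X i).Nonempty ∧ (Y i).Nonempty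
  let e := (good.orderEmbOfFin rfl).toEmbedding
  have he : ∀ i, (X (e i)).Nonempty ∧ (Y (e i)).Nonempty := fun i =>
    (mem_filter.1 (good.orderEmbOfFin_mem rfl i)).2
  refine ⟨#good, (card_le_univ good).trans_eq (Fintype.card_fin m), X ∘ e, Y ∘ e,
    fun i => ⟨(he i).1, (he i).2, hXY (e i)⟩, fun u v huv => ?_⟩
  have hcount : coverCount (X ∘ e) (Y ∘ e) u v = coverCount X Y u v := by
    symm
    refine card_filter_comp_embedding e fun i hi => ?_
    rw [RelEmbedding.coe_toEmbedding, range_orderEmbOfFin, coe_filter]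
    rcases hi with ⟨hu, hv⟩ | ⟨hu, hv⟩
    exacts [⟨mem_univ _, ⟨u, hu⟩, ⟨v, hv⟩⟩, ⟨mem_univ _, ⟨v, hv⟩, ⟨u, hu⟩⟩]
  rw [hcount]
  exact hcov u v huv

def letterSet {N d : ℕ} (w : Fin N → Fin d → Tern) (a : Tern) (j : Fin d) : Finset (Fin N) :=
  univ.filter fun u => w u j = a

lemma coverCount_letterSet {N d : ℕ} (w : Fin N → Fin d → Tern) (u v : Fin N) :
    coverCount (letterSet w .zero) (letterSet w .one) u v = dist (w u) (w v) := by
  simp only [coverCount, _root_.dist, letterSet, mem_filter, mem_univ, true_and,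
    clash_eq_true_iff]

lemma exists_hasBipCover_le_of_isNeighborlyCode {k d N : ℕ} {V : Finset (Fin d → Tern)}
    (hV : IsNeighborlyCode k d V) (hcard : #V = N) : ∃ m ≤ d, HasBipCover k N m := by
  let w : Fin N → Fin d → Tern := fun u => (V.equivFinOfCardEq hcard).symm u
  have hw : Function.Injective w := Subtype.val_injective.comp (Equiv.injective _)
  refine exists_hasBipCover_le_of_disjoint (letterSet w .zero) (letterSet w .one)
    (fun j => disjoint_filter.2 fun u _ hu => by simp [hu]) fun u v huv => ?_
  rw [coverCount_letterSet]
  exact hV _ (coe_mem _) _ (coe_mem _) (hw.ne huv)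

/-- Every edge `uv` with `u < v` is covered exactly by the star from `u` to the vertices
above it. -/
lemma exists_hasBipCover {k : ℕ} (hk : 1 ≤ k) (N : ℕ) : ∃ m, HasBipCover k N m := by
  have hstar : ∀ u v : Fin N, u ≠ v → coverCount (fun i => {i}) Ioi u v = 1 := by
    intro u v huv
    suffices univ.filter (fun i => (u ∈ ({i} : Finset _) ∧ v ∈ Ioi i) ∨
        (u ∈ Ioi i ∧ v ∈ ({i} : Finset _))) = {min u v} by rw [coverCount, this, card_singleton]
    ext i
    simp only [mem_filter, mem_univ, true_and, mem_singleton, mem_Ioi, Fin.ext_iff, Fin.lt_def,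
      Fin.coe_min]
    have := Fin.val_ne_of_ne huv
    omega
  obtain ⟨m, -, h⟩ := exists_hasBipCover_le_of_disjoint (k := k) (fun i : Fin N => {i}) Ioi
    (fun i => by simp) fun u v huv => by simp [hstar u v huv, hk]
  exact ⟨m, h⟩

theorem bp_le_iff_le_nMax_general (k d : ℕ) (hk : 1 ≤ k) (N : ℕ) :
    bp k N ≤ d ↔ N ≤ nMax k d := by
  constructor
  · intro hbp
    obtain ⟨V, hV, rfl⟩ :=
      exists_isNeighborlyCode_of_hasBipCover hbp (Nat.sInf_mem (exists_hasBipCover hk N))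
    exact card_le_nMax hV
  · intro hN
    obtain ⟨V, hV, hcard⟩ := exists_isNeighborlyCode_card_eq_nMax k d
    obtain ⟨W, hWV, hW⟩ := exists_subset_card_eq (hcard ▸ hN)
    obtain ⟨m, hm, hcover⟩ := exists_hasBipCover_le_of_isNeighborlyCode (hV.mono hWV) hW
    exact (Nat.sInf_le hcover).trans hm

/-- For `1 ≤ k ≤ d` and every `N ≥ 2`, `bp_k(K_N) ≤ d` iff `N ≤ n(k,d)`;
i.e. `n(k,d)` is the largest `N` with `bp_k(K_N) ≤ d`. -/
theorem bp_le_iff_le_nMax (k d : ℕ) (hk : 1 ≤ k) (hkd : k ≤ d) (N : ℕ) (hN : 2 ≤ N) :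
    bp k N ≤ d ↔ N ≤ nMax k d :=
  bp_le_iff_le_nMax_general k d hk N
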